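/- arXiv:math/0209216 — 3 statements merged into one kernel-verified Lean document; each statement's English description precedes it below -/
import Mathlib

section
/- Let R be a Noetherian ring and M an R-module. Then the set of elements x in R such that the localization M_x is a finitely generated R_x-module is an ideal of R. -/
open CategoryTheory

noncomputable section

universe u

/-- The Krull dimension of a module: `dim R/ann(M)`. -/
def moduleDim (R : Type u) [CommRing R] (M : Type*) [AddCommGroup M] [Module R M] :
    WithBot (WithTop ℕ) :=
  ringKrullDim (R ⧸ Module.annihilator R M)

/-- The depth of `M` with respect to an ideal `J`: the supremum of the lengths of
`M`-regular sequences consisting of elements of `J`. -/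
def moduleDepth (R : Type u) [CommRing R] (J : Ideal R) (M : Type*) [AddCommGroup M]
    [Module R M] : ℕ∞ :=
  sSup {n : ℕ∞ | ∃ rs : List R, (rs.length : ℕ∞) = n ∧ (∀ r ∈ rs, r ∈ J) ∧
    RingTheory.Sequence.IsRegular M rs}

/-- Serre's condition `S_ℓ` : for every prime `p` in the support of `M`,
`depth M_p ≥ min (ℓ, dim M_p)`. -/
def SerreCondition (R : Type u) [CommRing R] (ℓ : ℕ) (M : Type u) [AddCommGroup M]
    [Module R M] : Prop :=
  ∀ p ∈ Module.support R M,
    min ((ℓ : ℕ∞) : WithBot ℕ∞)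
        (moduleDim (Localization.AtPrime p.asIdeal) (LocalizedModule p.asIdeal.primeCompl M)) ≤
      ((moduleDepth (Localization.AtPrime p.asIdeal)
          (IsLocalRing.maximalIdeal (Localization.AtPrime p.asIdeal))
          (LocalizedModule p.asIdeal.primeCompl M) : ℕ∞) : WithBot ℕ∞)

/-- A module `N` over `S` is `J`-cofinite if its support is contained in `V(J)` and all the
modules `Ext^i_S(S/J, N)` are finitely generated. -/
def IsCofinite (S : Type u) [CommRing S] (J : Ideal S) (N : ModuleCat.{u} S) : Prop :=
  Module.support S N ⊆ PrimeSpectrum.zeroLocus (J : Set S) ∧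
  ∀ i : ℕ, Module.Finite S
    (((Ext S (ModuleCat.{u} S) i).obj (Opposite.op (ModuleCat.of S (S ⧸ J)))).obj N)

/-- A ring is catenary if any two saturated chains of primes with the same endpoints have
the same length. -/
def IsCatenaryRing (R : Type u) [CommRing R] : Prop :=
  ∀ c₁ c₂ : LTSeries (PrimeSpectrum R),
    c₁.head = c₂.head → c₁.last = c₂.last →
    (∀ i : Fin c₁.length, c₁.toFun i.castSucc ⋖ c₁.toFun i.succ) →
    (∀ i : Fin c₂.length, c₂.toFun i.castSucc ⋖ c₂.toFun i.succ) →
    c₁.length = c₂.length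

/-- A module is indecomposable if it is nonzero and is not the internal direct sum of two
nonzero submodules. -/
def ModuleIndecomposable (R : Type u) [CommRing R] (M : Type*) [AddCommGroup M]
    [Module R M] : Prop :=
  Nontrivial M ∧ ∀ N₁ N₂ : Submodule R M, IsCompl N₁ N₂ → N₁ = ⊥ ∨ N₂ = ⊥

/-- A module is equidimensional if `dim R/P = dim M` for every minimal prime `P`
of its support (equivalently, of its annihilator). -/
def Equidimensional (R : Type u) [CommRing R] (M : Type*) [AddCommGroup M]
    [Module R M] : Prop :=
  ∀ P ∈ (Module.annihilator R M).minimalPrimes, ringKrullDim (R ⧸ P) = moduleDim R M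

/-- A local ring is Cohen-Macaulay if its depth equals its Krull dimension. -/
def IsCMLocalRing (S : Type u) [CommRing S] [IsLocalRing S] : Prop :=
  ((moduleDepth S (IsLocalRing.maximalIdeal S) S : ℕ∞) : WithBot ℕ∞) = ringKrullDim S

/-- A ring is Cohen-Macaulay if all its localizations at primes are Cohen-Macaulay local
rings. -/
def IsCMRing (S : Type u) [CommRing S] : Prop :=
  ∀ p : PrimeSpectrum S, IsCMLocalRing (Localization.AtPrime p.asIdeal)

/-!
`M_x` is finite over `R_x` exactly when some finitely generated `N ⊆ M` absorbs every `m ∈ M`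
after multiplication by a power of `x`, i.e. when `x ∈ √(N : m)` for all `m`. Enlarging `N` only
enlarges these radicals, so if `N` works for `x` and `N'` works for `y`, then `N + N'` works for
both, hence for `x + y`, and for every multiple of `x`.
-/

open Submodule

section Localization

variable {R : Type*} [CommSemiring R] (R' : Type*) [CommSemiring R'] [Algebra R R']
  {M M' : Type*} [AddCommMonoid M] [Module R M] [AddCommMonoid M'] [Module R M'] [Module R' M']
  [IsScalarTower R R' M'] (S : Submonoid R) [IsLocalization S R']

theorem Submodule.mem_localized'_iff_exists_smul_mem (f : M →ₗ[R] M') [IsLocalizedModule S f]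
    {N : Submodule R M} {m : M} :
    f m ∈ N.localized' R' S f ↔ ∃ s ∈ S, s • m ∈ N := by
  constructor
  · rintro ⟨n, hn, s, hs⟩
    rw [IsLocalizedModule.mk'_eq_iff, Submonoid.smul_def, ← map_smul] at hs
    obtain ⟨c, hc⟩ := IsLocalizedModule.exists_of_eq (S := S) hs
    refine ⟨c * s, mul_mem c.2 s.2, ?_⟩
    rw [mul_smul, ← Submonoid.smul_def, ← hc]
    exact N.smul_of_tower_mem c hn
  · rintro ⟨s, hs, hsm⟩
    exact ⟨s • m, hsm, ⟨s, hs⟩, IsLocalizedModule.mk'_cancel f m ⟨s, hs⟩⟩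

theorem Submodule.localized'_eq_top_iff (f : M →ₗ[R] M') [IsLocalizedModule S f]
    {N : Submodule R M} :
    N.localized' R' S f = ⊤ ↔ ∀ m, ∃ s ∈ S, s • m ∈ N := by
  refine ⟨fun h m => (mem_localized'_iff_exists_smul_mem R' S f).1 (h ▸ trivial), fun h => ?_⟩
  rw [eq_top_iff, ← localized'_top R' S f, (localized'gi R' S f).gc]
  exact fun m _ => (mem_localized'_iff_exists_smul_mem R' S f).2 (h m)

theorem Submodule.exists_fg_localized'_eq_top (f : M →ₗ[R] M') [IsLocalizedModule S f]
    [Module.Finite R' M'] :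
    ∃ N : Submodule R M, N.FG ∧ N.localized' R' S f = ⊤ := by
  classical
  obtain ⟨T, hT⟩ := Module.Finite.fg_top (R := R') (M := M')
  choose frac hfrac using IsLocalizedModule.surj S f
  refine ⟨span R (T.image fun z => (frac z).1), ⟨_, rfl⟩, ?_⟩
  rw [localized'_span, eq_top_iff, ← hT, span_le]
  intro z hz
  rw [SetLike.mem_coe, ← IsLocalization.smul_mem_iff (s := (frac z).2), hfrac]
  exact subset_span ⟨_, by simpa using ⟨z, hz, rfl⟩, rfl⟩

theorem Module.finite_iff_exists_fg_forall_exists_smul_mem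
    (f : M →ₗ[R] M') [IsLocalizedModule S f] :
    Module.Finite R' M' ↔ ∃ N : Submodule R M, N.FG ∧ ∀ m, ∃ s ∈ S, s • m ∈ N := by
  refine ⟨fun _ => ?_, fun ⟨N, hN, h⟩ => ?_⟩
  · obtain ⟨N, hN, htop⟩ := exists_fg_localized'_eq_top R' S f
    exact ⟨N, hN, (localized'_eq_top_iff R' S f).1 htop⟩
  · rw [Module.finite_def, ← (localized'_eq_top_iff R' S f).2 h]
    exact localized'_fg R' S f hN

end Localization

theorem Submodule.mem_radical_colon_singleton_iff {R M : Type*} [CommSemiring R]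
    [AddCommMonoid M] [Module R M] {N : Submodule R M} {x : R} {m : M} :
    x ∈ (N.colon {m}).radical ↔ ∃ s ∈ Submonoid.powers x, s • m ∈ N := by
  simp [Ideal.mem_radical_iff, Submonoid.mem_powers_iff]

def Module.finiteAwayIdeal (R M : Type*) [CommSemiring R] [AddCommMonoid M] [Module R M] :
    Ideal R where
  carrier := {x | ∃ N : Submodule R M, N.FG ∧ ∀ m, x ∈ (N.colon {m}).radical}
  add_mem' := by
    rintro x y ⟨N, hN, hx⟩ ⟨N', hN', hy⟩
    exact ⟨N ⊔ N', hN.sup hN', fun m => Ideal.add_mem _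
      (Ideal.radical_mono (colon_mono le_sup_left le_rfl) (hx m))
      (Ideal.radical_mono (colon_mono le_sup_right le_rfl) (hy m))⟩
  zero_mem' := ⟨⊥, fg_bot, fun _ => Ideal.zero_mem _⟩
  smul_mem' := by
    rintro c x ⟨N, hN, hx⟩
    exact ⟨N, hN, fun m => Ideal.mul_mem_left _ c (hx m)⟩

theorem stmt0_general (R : Type u) [CommRing R]
    (M : Type u) [AddCommGroup M] [Module R M] :
    ∃ D : Ideal R, ∀ x : R, x ∈ D ↔
      Module.Finite (Localization.Away x) (LocalizedModule (Submonoid.powers x) M) := by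
  refine ⟨Module.finiteAwayIdeal R M, fun x => ?_⟩
  rw [Module.finite_iff_exists_fg_forall_exists_smul_mem (Localization.Away x)
    (Submonoid.powers x) (LocalizedModule.mkLinearMap (Submonoid.powers x) M)]
  simp only [← mem_radical_colon_singleton_iff]
  rfl

/-- The set of `x ∈ R` such that `M_x` is a finitely generated `R_x`-module is an ideal. -/
theorem stmt0 (R : Type u) [CommRing R] [IsNoetherianRing R]
    (M : Type u) [AddCommGroup M] [Module R M] :
    ∃ D : Ideal R, ∀ x : R, x ∈ D ↔
      Module.Finite (Localization.Away x) (LocalizedModule (Submonoid.powers x) M) :=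
  stmt0_general R M
end
end

section
/- Suppose (R,m) is a complete Noetherian local ring, I an ideal of R, and {P_i} for i in the positive integers is a countable collection of prime ideals of R, none of which contains I. Then there exists an element x in I which is not contained in P_i for all i. -/
open CategoryTheory

noncomputable section

universe u

/-! Build `x₀ = 0, x₁, x₂, … ∈ I` and exponents `c₀ < c₁ < ⋯` such that
`x (n+1) - x n ∈ m ^ c n * I` and `x (n+1) ∉ P n + m ^ c (n+1)`: coset avoidance of the single
prime `P n` produces `x (n+1)`, and Krull's intersection theorem produces `c (n+1)`. The limit
`L` of the sequence lies in `I` because `I` is `m`-adically closed, and `L ∉ P n` because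
`L ≡ x (n+1)` modulo `m ^ c (n+1)`. -/

open IsLocalRing

namespace Ideal

variable {R : Type*} [CommRing R]

theorem exists_add_notMem_of_not_le {J P : Ideal R} [P.IsPrime] (hJP : ¬ J ≤ P) (x : R) :
    ∃ t ∈ J, x + t ∉ P := by
  by_cases hx : x ∈ P
  · obtain ⟨t, htJ, htP⟩ := SetLike.not_le_iff_exists.mp hJP
    exact ⟨t, htJ, fun h => htP (by simpa using P.sub_mem h hx)⟩
  · exact ⟨0, J.zero_mem, by simpa using hx⟩

theorem pow_mul_not_le {I K P : Ideal R} [P.IsPrime] (hIK : I ≤ K) (hIP : ¬ I ≤ P) (c : ℕ) :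
    ¬ K ^ c * I ≤ P := fun h =>
  hIP <| IsPrime.le_of_pow_le <| (pow_succ I c).le.trans <|
    (mul_mono_left (pow_right_mono hIK c)).trans h

theorem mem_of_forall_mem_sup_pow [IsNoetherianRing R] {J K : Ideal R} (hK : K ≤ jacobson ⊥)
    {x : R} (hx : ∀ n : ℕ, x ∈ J ⊔ K ^ n) : x ∈ J := by
  rw [← Quotient.eq_zero_iff_mem]
  refine (IsHausdorff.of_le_jacobson K (R ⧸ J) hK).haus _ fun n => ?_
  rw [SModEq.zero, smul_top_eq_map, Submodule.restrictScalars_mem]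
  exact mem_quotient_iff_mem_sup.mpr (sup_comm J _ ▸ hx n)

theorem exists_lt_notMem_sup_pow [IsNoetherianRing R] {J K : Ideal R} (hK : K ≤ jacobson ⊥)
    {x : R} (hx : x ∉ J) (c : ℕ) : ∃ d, c < d ∧ x ∉ J ⊔ K ^ d := by
  by_contra! h
  refine hx (mem_of_forall_mem_sup_pow hK fun n => ?_)
  exact sup_le_sup_left (pow_le_pow_right (le_max_left n (c + 1))) J
    (h _ (Nat.lt_of_succ_le (le_max_right _ _)))

end Ideal

theorem Submodule.sub_mem_of_antitone {R M : Type*} [Ring R] [AddCommGroup M] [Module R M]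
    {F : ℕ → Submodule R M} (hF : Antitone F) {x : ℕ → M} (hx : ∀ n, x (n + 1) - x n ∈ F n)
    {a b : ℕ} (hab : a ≤ b) : x b - x a ∈ F a := by
  induction b, hab using Nat.le_induction with
  | base => simp
  | succ b hab ih => simpa using (F a).add_mem (hF hab (hx b)) ih

theorem IsPrecomplete.exists_sub_mem_pow {R : Type*} [CommRing R] {J : Ideal R}
    [IsPrecomplete J R] {x : ℕ → R} {c : ℕ → ℕ} (hc : StrictMono c)
    (hx : ∀ n, x (n + 1) - x n ∈ J ^ c n) : ∃ L, ∀ n, L - x n ∈ J ^ c n := by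
  have hcauchy {a b : ℕ} (hab : a ≤ b) : x b - x a ∈ J ^ c a :=
    Submodule.sub_mem_of_antitone (fun _ _ h => Ideal.pow_le_pow_right (hc.monotone h)) hx hab
  obtain ⟨L, hL⟩ := IsPrecomplete.prec ‹_› (f := x) fun {a b} hab => by
    rw [SModEq.sub_mem, smul_eq_mul, Ideal.mul_top, ← neg_sub]
    exact neg_mem (Ideal.pow_le_pow_right (hc.id_le a) (hcauchy hab))
  refine ⟨L, fun n => ?_⟩
  have hLc : L - x (c n) ∈ J ^ c n := by
    have := (hL (c n)).symm
    rwa [SModEq.sub_mem, smul_eq_mul, Ideal.mul_top] at this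
  simpa using add_mem hLc (hcauchy (hc.id_le n))

theorem IsLocalRing.exists_seq_notMem_sup_pow {R : Type*} [CommRing R] [IsNoetherianRing R]
    [IsLocalRing R] {I : Ideal R} (hI : I ≠ ⊤) {P : ℕ → Ideal R} (hP : ∀ n, (P n).IsPrime)
    (hIP : ∀ n, ¬ I ≤ P n) :
    ∃ (x : ℕ → R) (c : ℕ → ℕ), (∀ n, x n ∈ I) ∧ StrictMono c ∧
      (∀ n, x (n + 1) - x n ∈ maximalIdeal R ^ c n) ∧
      ∀ n, x (n + 1) ∉ P n ⊔ maximalIdeal R ^ c (n + 1) := by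
  have step (n : ℕ) (x : R) (c : ℕ) : ∃ y d, y - x ∈ maximalIdeal R ^ c * I ∧ c < d ∧
      y ∉ P n ⊔ maximalIdeal R ^ d := by
    have := hP n
    obtain ⟨t, ht, hxt⟩ :=
      Ideal.exists_add_notMem_of_not_le (Ideal.pow_mul_not_le (le_maximalIdeal hI) (hIP n) c) x
    obtain ⟨d, hcd, hd⟩ := Ideal.exists_lt_notMem_sup_pow (maximalIdeal_le_jacobson ⊥) hxt c
    exact ⟨x + t, d, by simpa using ht, hcd, hd⟩
  choose y d hyd using step
  let s : ℕ → R × ℕ := fun n => Nat.rec (0, 0) (fun k p => (y k p.1 p.2, d k p.1 p.2)) n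
  have hs (n : ℕ) : (s (n + 1)).1 - (s n).1 ∈ maximalIdeal R ^ (s n).2 * I ∧
      (s n).2 < (s (n + 1)).2 ∧ (s (n + 1)).1 ∉ P n ⊔ maximalIdeal R ^ (s (n + 1)).2 :=
    hyd n (s n).1 (s n).2
  have hsI (n : ℕ) : (s n).1 ∈ I := by
    induction n with
    | zero => exact I.zero_mem
    | succ n ih =>
      rw [← sub_add_cancel (s (n + 1)).1 (s n).1]
      exact I.add_mem (Ideal.mul_le_right (hs n).1) ih
  exact ⟨fun n => (s n).1, fun n => (s n).2, hsI, strictMono_nat_of_lt_succ fun n => (hs n).2.1,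
    fun n => Ideal.mul_le_left (hs n).1, fun n => (hs n).2.2⟩

theorem stmt2 (R : Type u) [CommRing R] [IsNoetherianRing R] [IsLocalRing R]
    [IsAdicComplete (IsLocalRing.maximalIdeal R) R]
    (I : Ideal R) (P : ℕ → Ideal R) (hP : ∀ i, (P i).IsPrime)
    (hPI : ∀ i, ¬ I ≤ P i) :
    ∃ x ∈ I, ∀ i, x ∉ P i := by
  by_cases hI : I = ⊤
  · exact ⟨1, hI ▸ Submodule.mem_top, fun i => (hP i).one_notMem⟩
  obtain ⟨x, c, hxI, hc, hx, hxP⟩ := exists_seq_notMem_sup_pow hI hP hPI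
  obtain ⟨L, hL⟩ := IsPrecomplete.exists_sub_mem_pow hc hx
  refine ⟨L, Ideal.mem_of_forall_mem_sup_pow (maximalIdeal_le_jacobson ⊥) fun n => ?_,
    fun n hLP => hxP n ?_⟩
  · rw [← add_sub_cancel (x n) L]
    exact Submodule.add_mem_sup (hxI n) (Ideal.pow_le_pow_right (hc.id_le n) (hL n))
  · rw [← sub_sub_cancel L (x (n + 1))]
    exact Submodule.sub_mem_sup hLP (hL (n + 1))
end
end

section
/- Let (R,m) be a complete Noetherian local ring and N an R-module with Supp_R N ⊆ {m} such that Hom_R(R/m, N) is finitely generated. Then N is Artinian. -/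
open CategoryTheory

noncomputable section

universe u

namespace Stmt10Hidden

open IsLocalRing


namespace Stmt10Aux

variable {R : Type u} [CommRing R]

section Hull
variable {Q : Type u} [AddCommGroup Q] [Module R Q]

/-- `S` is essential in `E` (with `S ≤ E`). -/
def Ess (S E : Submodule R Q) : Prop :=
  S ≤ E ∧ ∀ x ∈ E, x ≠ 0 → ∃ r : R, r • x ∈ S ∧ r • x ≠ 0

lemma exists_maximal_ess (S : Submodule R Q) :
    ∃ E : Submodule R Q, Ess S E ∧ ∀ E', Ess S E' → E ≤ E' → E' = E := by
  have hS : Ess S S := ⟨le_rfl, fun x hx hx0 => ⟨1, by simpa using hx, by simpa using hx0⟩⟩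
  have hchains : ∀ c ⊆ {E : Submodule R Q | Ess S E}, IsChain (· ≤ ·) c → ∀ y ∈ c,
      ∃ ub ∈ {E | Ess S E}, ∀ z ∈ c, z ≤ ub := by
    intro c hc hchain y hy
    refine ⟨sSup c, ⟨le_trans (hc hy).1 (le_sSup hy), ?_⟩, fun z hz => le_sSup hz⟩
    intro x hx hx0
    obtain ⟨E', hE'c, hxE'⟩ := (Submodule.mem_sSup_of_directed ⟨y, hy⟩ hchain.directedOn).mp hx
    exact (hc hE'c).2 x hxE' hx0
  obtain ⟨E, -, hmax⟩ := zorn_le_nonempty₀ {E | Ess S E} hchains S hS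
  exact ⟨E, hmax.1, fun E' hE' hle => le_antisymm (hmax.2 hE' hle) hle⟩

lemma retraction_of_maximal_ess [Module.Injective R Q] {S E : Submodule R Q}
    (hE : Ess S E) (hmax : ∀ E', Ess S E' → E ≤ E' → E' = E) :
    ∃ ρ : Q →ₗ[R] ↥E, ∀ x : ↥E, ρ (x : Q) = x := by
  -- maximal complement C
  have hchains : ∀ c ⊆ {C : Submodule R Q | C ⊓ E = ⊥}, IsChain (· ≤ ·) c → ∀ y ∈ c,
      ∃ ub ∈ {C | C ⊓ E = ⊥}, ∀ z ∈ c, z ≤ ub := by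
    intro c hc hchain y hy
    refine ⟨sSup c, ?_, fun z hz => le_sSup hz⟩
    show sSup c ⊓ E = ⊥
    rw [eq_bot_iff]
    rintro x ⟨hx1, hx2⟩
    obtain ⟨C', hC'c, hxC'⟩ := (Submodule.mem_sSup_of_directed ⟨y, hy⟩ hchain.directedOn).mp hx1
    exact (hc hC'c) ▸ Submodule.mem_inf.mpr ⟨hxC', hx2⟩
  obtain ⟨C, -, hCmax⟩ := zorn_le_nonempty₀ {C : Submodule R Q | C ⊓ E = ⊥} hchains ⊥
    (by simp)
  have hC : C ⊓ E = ⊥ := hCmax.1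
  set p : ↥E →ₗ[R] Q ⧸ C := C.mkQ.comp E.subtype with hp
  have hpinj : Function.Injective p := by
    rw [← LinearMap.ker_eq_bot, eq_bot_iff]
    rintro ⟨x, hxE⟩ hx
    have hxC : x ∈ C := by simpa [p, Submodule.Quotient.mk_eq_zero] using hx
    have : x ∈ C ⊓ E := ⟨hxC, hxE⟩
    rw [hC] at this
    simpa using this
  obtain ⟨h, hh⟩ := Module.Injective.out p hpinj E.subtype
  -- essentiality of range p in Q/C
  have hess : ∀ y : Q ⧸ C, y ≠ 0 → ∃ (r : R) (e : ↥E), (e : Q) ≠ 0 ∧ r • y = p e := by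
    intro y hy
    obtain ⟨q, rfl⟩ := C.mkQ_surjective y
    have hq : q ∉ C := fun hq => hy (by simpa [Submodule.Quotient.mk_eq_zero] using hq)
    have hne : (C ⊔ (R ∙ q)) ⊓ E ≠ ⊥ := by
      intro hbot
      have h2 : C ⊔ (R ∙ q) ≤ C := hCmax.2 hbot le_sup_left
      exact hq (h2 (Submodule.mem_sup_right (Submodule.mem_span_singleton_self q)))
    obtain ⟨e, he, hene⟩ := Submodule.exists_mem_ne_zero_of_ne_bot hne
    obtain ⟨heCq, heE⟩ := Submodule.mem_inf.mp he
    obtain ⟨c, hc, z, hz, rfl⟩ := Submodule.mem_sup.mp heCq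
    obtain ⟨r, rfl⟩ := Submodule.mem_span_singleton.mp hz
    refine ⟨r, ⟨c + r • q, heE⟩, hene, ?_⟩
    show r • Submodule.Quotient.mk q = C.mkQ (c + r • q)
    rw [map_add, Submodule.mkQ_apply, Submodule.mkQ_apply,
      (Submodule.Quotient.mk_eq_zero C).mpr hc, zero_add, Submodule.Quotient.mk_smul]
  -- h is injective
  have hhinj : Function.Injective h := by
    rw [← LinearMap.ker_eq_bot, eq_bot_iff]
    intro y hy
    by_contra hyne
    have hy0 : h y = 0 := hy
    obtain ⟨r, e, hene, hre⟩ := hess y (by simpa using hyne)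
    have heq : h (r • y) = (e : Q) := by rw [hre]; exact hh e
    rw [map_smul, hy0, smul_zero] at heq
    exact hene heq.symm
  -- range h = E
  have hrange : LinearMap.range h ≤ E := by
    have hEle : E ≤ LinearMap.range h := by
      intro x hx
      exact ⟨p ⟨x, hx⟩, hh ⟨x, hx⟩⟩
    have : Ess S (LinearMap.range h) := by
      refine ⟨le_trans hE.1 hEle, ?_⟩
      rintro x ⟨y, rfl⟩ hx0
      have hyne : y ≠ 0 := by rintro rfl; simp at hx0
      obtain ⟨r, e, hene, hre⟩ := hess y hyne
      have hrx : r • h y = (e : Q) := by rw [← map_smul, hre]; exact hh e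
      obtain ⟨r', hr'S, hr'ne⟩ := hE.2 (r • h y) (hrx ▸ e.2) (hrx ▸ hene)
      exact ⟨r' * r, by rwa [mul_smul], by rwa [mul_smul]⟩
    exact le_of_eq (hmax _ this hEle)
  refine ⟨LinearMap.codRestrict E (h ∘ₗ C.mkQ) (fun x => hrange ⟨C.mkQ x, rfl⟩), fun x => ?_⟩
  apply Subtype.ext
  show h (C.mkQ (x : Q)) = (x : Q)
  exact hh x

lemma injective_of_retraction [Module.Injective R Q] {E : Submodule R Q}
    (hρ : ∃ ρ : Q →ₗ[R] ↥E, ∀ x : ↥E, ρ (x : Q) = x) : Module.Injective R ↥E := by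
  obtain ⟨ρ, hρ⟩ := hρ
  constructor
  intro X Y _ _ _ _ f hf g
  obtain ⟨h, hh⟩ := Module.Injective.out f hf (E.subtype ∘ₗ g)
  refine ⟨ρ ∘ₗ h, fun x => ?_⟩
  show ρ (h (f x)) = g x
  rw [hh]
  exact hρ (g x)

lemma socle_eq [IsLocalRing R] {S E : Submodule R Q} (hE : Ess S E)
    (hS : ∀ s ∈ S, ∀ r ∈ maximalIdeal R, r • s = 0)
    {x : Q} (hx : x ∈ E) (hsoc : ∀ r ∈ maximalIdeal R, r • x = 0) : x ∈ S := by
  by_cases hx0 : x = 0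
  · simp [hx0]
  obtain ⟨r, hrS, hrne⟩ := hE.2 x hx hx0
  have hru : IsUnit r := by
    by_contra hru
    exact hrne (hsoc r ((mem_maximalIdeal r).mpr hru))
  obtain ⟨u, rfl⟩ := hru
  have : ((u⁻¹ : Rˣ) : R) • ((u : R) • x) ∈ S := S.smul_mem _ hrS
  rwa [smul_smul, Units.inv_mul, one_smul] at this

end Hull

lemma fg_of_complete [IsLocalRing R] [IsAdicComplete (maximalIdeal R) R]
    {M : Type u} [AddCommGroup M] [Module R M] {n : ℕ} (xs : Fin n → M)
    (hgen : (⊤ : Submodule R M) ≤ Submodule.span R (Set.range xs) ⊔ (maximalIdeal R) • ⊤)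
    (hsep : ∀ z : M, (∀ k : ℕ, z ∈ ((maximalIdeal R) ^ k • ⊤ : Submodule R M)) → z = 0) :
    (⊤ : Submodule R M) = Submodule.span R (Set.range xs) := by
  set I := maximalIdeal R with hI
  set F := Submodule.span R (Set.range xs) with hF
  have step1 : ∀ k : ℕ, (I ^ k • ⊤ : Submodule R M) ≤ I ^ k • F ⊔ I ^ (k + 1) • ⊤ := by
    intro k
    calc (I ^ k • ⊤ : Submodule R M) ≤ I ^ k • (F ⊔ I • ⊤) :=
          Submodule.smul_mono le_rfl hgen
      _ = I ^ k • F ⊔ I ^ k • (I • ⊤) := Submodule.smul_sup _ _ _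
      _ = I ^ k • F ⊔ I ^ (k + 1) • ⊤ := by
          congr 1
          rw [pow_succ]
          exact (Submodule.smul_assoc _ _ _).symm
  have step2 : ∀ (k : ℕ) (z : M), z ∈ (I ^ k • ⊤ : Submodule R M) →
      ∃ (a : Fin n → R) (z' : M), (∀ i, a i ∈ I ^ k) ∧ z' ∈ (I ^ (k + 1) • ⊤ : Submodule R M) ∧
        z = (∑ i, a i • xs i) + z' := by
    intro k z hz
    obtain ⟨w, hw, z', hz', rfl⟩ := Submodule.mem_sup.mp (step1 k hz)
    obtain ⟨a, ha, hsum⟩ := (Submodule.mem_ideal_smul_span_iff_exists_sum (I ^ k) xs w).mp hw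
    refine ⟨fun i => a i, z', fun i => ha i, hz', ?_⟩
    rw [← hsum, Finsupp.sum_fintype]
    intro i; exact zero_smul R (xs i)
  rw [eq_comm, eq_top_iff]
  intro y _hy
  choose av znext ha hznext hrep using step2
  let T : ℕ → Type _ := fun k => {z : M // z ∈ (I ^ k • ⊤ : Submodule R M)}
  let sq : ∀ k : ℕ, T k := fun k => Nat.rec
    (⟨y, by rw [pow_zero, one_smul]; trivial⟩ : T 0)
    (fun k zk => (⟨znext k zk.1 zk.2, hznext k zk.1 zk.2⟩ : T (k + 1))) k
  set A : ℕ → Fin n → R := fun k => av k (sq k).1 (sq k).2 with hA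
  have hseq : ∀ k, (sq k).1 = (∑ i, A k i • xs i) + (sq (k + 1)).1 := by
    intro k
    exact hrep k (sq k).1 (sq k).2
  have hAmem : ∀ k i, A k i ∈ I ^ k := fun k i => ha k (sq k).1 (sq k).2 i
  set c : ℕ → Fin n → R := fun K i => ∑ k ∈ Finset.range K, A k i with hc
  have hidm : ∀ K : ℕ, (I ^ K • ⊤ : Submodule R R) = (I ^ K : Ideal R) := by
    intro K; simp
  have hcauchy : ∀ i : Fin n, ∃ b : R, ∀ K : ℕ,
      c K i ≡ b [SMOD (I ^ K • ⊤ : Submodule R R)] := by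
    intro i
    refine IsPrecomplete.prec (IsAdicComplete.toIsPrecomplete) ?_
    intro K K' hKK'
    rw [SModEq.sub_mem, hidm]
    have : c K' i - c K i ∈ I ^ K := by
      rw [hc]
      simp only [← Finset.sum_Ico_eq_sub _ hKK']
      refine Ideal.sum_mem _ (fun k hk => ?_)
      exact Ideal.pow_le_pow_right (Finset.mem_Ico.mp hk).1 (hAmem k i)
    simpa using neg_mem this
  choose b hb using hcauchy
  have htel : ∀ K : ℕ, y = (∑ i, c K i • xs i) + (sq K).1 := by
    intro K
    induction K with
    | zero =>
      have h0 : (sq 0).1 = y := rfl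
      simp [hc, h0]
    | succ K ih =>
      rw [ih, hseq K, ← add_assoc]
      congr 1
      rw [← Finset.sum_add_distrib]
      refine Finset.sum_congr rfl (fun i _ => ?_)
      rw [hc]
      simp only [Finset.sum_range_succ, add_smul]
  have hdiff : ∀ K : ℕ, y - (∑ i, b i • xs i) ∈ (I ^ K • ⊤ : Submodule R M) := by
    intro K
    have hsub : ∑ i, (c K i - b i) • xs i
        = (∑ i, c K i • xs i) - ∑ i, b i • xs i := by
      rw [← Finset.sum_sub_distrib]
      exact Finset.sum_congr rfl (fun i _ => sub_smul _ _ _)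
    have hKrep : y - (∑ i, b i • xs i) = (sq K).1 + ∑ i, (c K i - b i) • xs i := by
      rw [htel K, hsub]
      abel
    rw [hKrep]
    refine Submodule.add_mem _ (sq K).2 (Submodule.sum_mem _ (fun i _ => ?_))
    have : c K i - b i ∈ I ^ K := by
      have := (SModEq.sub_mem).mp (hb i K)
      rwa [hidm] at this
    exact Submodule.smul_mem_smul this trivial
  have hy0 : y - (∑ i, b i • xs i) = 0 := hsep _ hdiff
  have : y = ∑ i, b i • xs i := by rw [← sub_eq_zero]; exact hy0
  rw [this]
  exact Submodule.sum_mem _ (fun i _ =>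
    Submodule.smul_mem _ _ (Submodule.subset_span (Set.mem_range_self i)))

end Stmt10Aux

end Stmt10Hidden

open Stmt10Hidden.Stmt10Aux CategoryTheory IsLocalRing in

theorem stmt10 (R : Type u) [CommRing R] [IsNoetherianRing R] [IsLocalRing R]
    [IsAdicComplete (IsLocalRing.maximalIdeal R) R]
    (N : Type u) [AddCommGroup N] [Module R N]
    (hsupp : Module.support R N ⊆ {p | p.asIdeal = IsLocalRing.maximalIdeal R})
    (hfg : Module.Finite R ((R ⧸ IsLocalRing.maximalIdeal R) →ₗ[R] N)) :
    IsArtinian R N := by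
  classical
  set mI : Ideal R := maximalIdeal R with hmI
  -- Step 1 : every element is killed by a power of mI
  have htor : ∀ x : N, ∃ k : ℕ, ∀ r ∈ mI ^ k, r • x = 0 := by
    intro x
    by_cases hx : (Submodule.span R {x}).annihilator = ⊤
    · refine ⟨0, fun r _ => ?_⟩
      exact (Submodule.mem_annihilator_span_singleton x r).mp (hx ▸ Submodule.mem_top)
    · have hrad : mI ≤ (Submodule.span R {x}).annihilator.radical := by
        rw [Ideal.radical_eq_sInf]
        refine le_sInf ?_
        rintro p ⟨hple, hp⟩
        have hmem : (⟨p, hp⟩ : PrimeSpectrum R) ∈ Module.support R N :=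
          Module.mem_support_iff_exists_annihilator.mpr ⟨x, hple⟩
        have := hsupp hmem
        simp only [Set.mem_setOf_eq] at this
        exact le_of_eq this.symm
      obtain ⟨k, hk⟩ := Ideal.exists_radical_pow_le_of_fg
        (Submodule.span R {x}).annihilator (IsNoetherian.noetherian _)
      refine ⟨k, fun r hr => ?_⟩
      have : r ∈ (Submodule.span R {x}).annihilator :=
        hk (Ideal.pow_right_mono hrad k hr)
      exact (Submodule.mem_annihilator_span_singleton x r).mp this
  -- Step 2 : an injective container of the residue field
  letI : EnoughInjectives (ModuleCat.{u} R) := ModuleCat.enoughInjectives.{u} R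
  let X : ModuleCat.{u} R := ModuleCat.of R (R ⧸ mI)
  let QM : ModuleCat.{u} R := Injective.under X
  haveI : Injective QM := Injective.injective_under X
  haveI : Injective (ModuleCat.of R QM) := ‹Injective QM›
  haveI hQinj : Module.Injective R QM := Module.injective_module_of_injective_object R QM
  let emb : (R ⧸ mI) →ₗ[R] QM := (Injective.ι X).hom
  have hemb : Function.Injective emb :=
    (ModuleCat.mono_iff_injective (Injective.ι X)).mp inferInstance
  -- residue field killed by mI
  have hkill : ∀ (z : R ⧸ mI) (r : R), r ∈ mI → r • z = 0 := by
    intro z r hr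
    obtain ⟨w, rfl⟩ := Ideal.Quotient.mk_surjective z
    show r • Ideal.Quotient.mk mI w = 0
    have : r • Ideal.Quotient.mk mI w = Ideal.Quotient.mk mI (r * w) := rfl
    rw [this, Ideal.Quotient.eq_zero_iff_mem]
    exact mI.mul_mem_right w hr
  -- Step 3 : the essential hull E of S := range emb
  set S : Submodule R QM := LinearMap.range emb with hSdef
  obtain ⟨E, hE, hmax⟩ := exists_maximal_ess (R := R) S
  haveI hEinj : Module.Injective R ↥E :=
    injective_of_retraction (retraction_of_maximal_ess hE hmax)
  have hS : ∀ s ∈ S, ∀ r ∈ mI, r • s = 0 := by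
    rintro s ⟨z, rfl⟩ r hr
    rw [← map_smul, hkill z r hr, map_zero]
  -- embedding of the residue field into E
  let e' : (R ⧸ mI) →ₗ[R] ↥E := LinearMap.codRestrict E emb (fun z => hE.1 ⟨z, rfl⟩)
  have he'inj : Function.Injective e' := by
    intro a b hab
    exact hemb (congrArg Subtype.val hab)
  haveI : Nontrivial (R ⧸ mI) := Ideal.Quotient.nontrivial_iff.mpr (Ideal.IsMaximal.ne_top inferInstance)
  haveI : Module.Finite R (R ⧸ mI) :=
    Module.Finite.of_surjective (mI : Submodule R R).mkQ (Submodule.mkQ_surjective _)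
  -- the dual module D
  set D := (N →ₗ[R] ↥E) with hDdef
  -- perp
  let perp : Submodule R N → Submodule R D := fun A =>
    { carrier := {f : D | ∀ a ∈ A, f a = 0}
      add_mem' := by
        intro f g hf hg a ha
        show (f + g) a = 0
        rw [LinearMap.add_apply, hf a ha, hg a ha, add_zero]
      zero_mem' := by intro a _; rfl
      smul_mem' := by
        intro r f hf a ha
        show (r • f) a = 0
        rw [LinearMap.smul_apply, hf a ha, smul_zero] }
  -- socle of N
  let A1 : Submodule R N :=
    { carrier := {x : N | ∀ r ∈ mI, r • x = 0}
      add_mem' := by intro x y hx hy r hr; rw [smul_add, hx r hr, hy r hr, add_zero]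
      zero_mem' := by intro r _; simp
      smul_mem' := by
        intro c x hx r hr
        rw [smul_comm, hx r hr, smul_zero] }
  -- A1 is finitely generated
  have hA1fg : A1.FG := by
    let ev : ((R ⧸ mI) →ₗ[R] N) →ₗ[R] N :=
      { toFun := fun f => f 1
        map_add' := fun f g => rfl
        map_smul' := fun r f => rfl }
    have hrange : LinearMap.range ev = A1 := by
      apply le_antisymm
      · rintro _ ⟨f, rfl⟩ r hr
        show r • f 1 = 0
        rw [← map_smul, hkill 1 r hr, map_zero]
      · intro x hx
        have hker : mI ≤ LinearMap.ker (LinearMap.toSpanSingleton R N x) := by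
          intro r hr
          rw [LinearMap.mem_ker, LinearMap.toSpanSingleton_apply]
          exact hx r hr
        refine ⟨Submodule.liftQ mI (LinearMap.toSpanSingleton R N x) hker, ?_⟩
        show Submodule.liftQ mI (LinearMap.toSpanSingleton R N x) hker 1 = x
        have h1 : (1 : R ⧸ mI) = Submodule.Quotient.mk 1 := rfl
        rw [h1, Submodule.liftQ_apply, LinearMap.toSpanSingleton_apply, one_smul]
    rw [← hrange, LinearMap.range_eq_map]
    exact (Module.finite_def.mp hfg).map ev
  obtain ⟨t, ht⟩ := hA1fg
  have htA1 : ∀ a ∈ t, (a : N) ∈ A1 := fun a ha => ht ▸ Submodule.subset_span ha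
  -- the socle of E
  let SE : Submodule R ↥E := S.comap E.subtype
  have hSEfg : SE.FG := by
    have hre : LinearMap.range e' = SE := by
      apply le_antisymm
      · rintro _ ⟨z, rfl⟩
        show ((e' z : ↥E) : QM) ∈ S
        exact ⟨z, rfl⟩
      · rintro y hy
        obtain ⟨z, hz⟩ := hy
        exact ⟨z, Subtype.ext hz⟩
    rw [← hre, LinearMap.range_eq_map]
    exact (Module.finite_def.mp inferInstance).map e'
  haveI hSEnoeth : IsNoetherian R ↥SE := isNoetherian_of_fg_of_noetherian SE hSEfg
  -- Φ
  have hPhiMem : ∀ (f : D) (a : N), a ∈ A1 → f a ∈ SE := by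
    intro f a ha
    show ((f a : ↥E) : QM) ∈ S
    apply socle_eq hE hS (f a).2
    intro r hr
    have h0 : r • f a = 0 := by
      rw [← map_smul, ha r hr, map_zero]
    have : ((r • f a : ↥E) : QM) = r • ((f a : ↥E) : QM) := rfl
    rw [← this, h0, Submodule.coe_zero]
  let Phi : D →ₗ[R] ({a // a ∈ t} → ↥SE) :=
    { toFun := fun f => fun a => ⟨f a.1, hPhiMem f a.1 (htA1 a.1 a.2)⟩
      map_add' := by intro f g; funext a; rfl
      map_smul' := by intro r f; funext a; rfl }
  have hkerPhi : LinearMap.ker Phi = perp A1 := by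
    ext f
    simp only [LinearMap.mem_ker]
    constructor
    · intro h x hx
      rw [← ht] at hx
      refine Submodule.span_induction (fun a ha => ?_) (map_zero f) (fun a b _ _ h1 h2 => by
        rw [map_add, h1, h2, add_zero]) (fun r a _ h1 => by rw [map_smul, h1, smul_zero]) hx
      have := congrFun h (⟨a, ha⟩ : {a // a ∈ t})
      exact Subtype.ext_iff.mp this
    · intro h
      funext a
      exact Subtype.ext (h a.1 (htA1 a.1 a.2))
  -- the key lemma: perp A1 ≤ mI • ⊤
  have hperp : perp A1 ≤ (mI • ⊤ : Submodule R D) := by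
    obtain ⟨tm, u, hu⟩ := Submodule.fg_iff_exists_fin_generating_family.mp
      (IsNoetherian.noetherian mI)
    have humem : ∀ j, u j ∈ mI := fun j => hu ▸ Submodule.subset_span (Set.mem_range_self j)
    intro f hf
    let φ : N →ₗ[R] (Fin tm → N) := LinearMap.pi (fun j => u j • (LinearMap.id : N →ₗ[R] N))
    have hker1 : ∀ x, x ∈ LinearMap.ker φ → x ∈ A1 := by
      intro x hx r hr
      have hx' : ∀ j, u j • x = 0 := fun j => congrFun (LinearMap.mem_ker.mp hx) j
      rw [← hu] at hr
      refine Submodule.span_induction ?_ (by rw [zero_smul])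
        (fun r1 r2 _ _ h1 h2 => by rw [add_smul, h1, h2, add_zero])
        (fun c r1 _ h1 => by rw [smul_eq_mul, mul_smul, h1, smul_zero]) hr
      rintro _ ⟨j, rfl⟩
      exact hx' j
    let ψ : (N ⧸ LinearMap.ker φ) →ₗ[R] (Fin tm → N) := (LinearMap.ker φ).liftQ φ le_rfl
    have hψinj : Function.Injective ψ := by
      rw [← LinearMap.ker_eq_bot]
      exact Submodule.ker_liftQ_eq_bot _ _ _ le_rfl
    let fbar : (N ⧸ LinearMap.ker φ) →ₗ[R] ↥E := (LinearMap.ker φ).liftQ f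
      (fun x hx => by rw [LinearMap.mem_ker]; exact hf x (hker1 x hx))
    obtain ⟨g, hg⟩ := Module.Injective.out (Q := ↥E) ψ hψinj fbar
    have hfeq : ∀ x : N, f x = g (φ x) := by
      intro x
      have h2 := hg (Submodule.Quotient.mk x)
      have h1 : ψ (Submodule.Quotient.mk x) = φ x := by
        show (LinearMap.ker φ).liftQ φ le_rfl (Submodule.Quotient.mk x) = φ x
        rw [Submodule.liftQ_apply]
      have h3 : fbar (Submodule.Quotient.mk x) = f x := by
        show (LinearMap.ker φ).liftQ f _ (Submodule.Quotient.mk x) = f x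
        rw [Submodule.liftQ_apply]
      rw [h1, h3] at h2
      exact h2.symm
    have hsum : f = ∑ j, u j • (g ∘ₗ LinearMap.single R (fun _ => N) j) := by
      refine LinearMap.ext fun x => ?_
      rw [hfeq x]
      have hφ : φ x = ∑ j, Pi.single j (u j • x) := by
        funext j'
        rw [Finset.sum_apply]
        simp only [Finset.sum_pi_single, Finset.mem_univ, if_true]
        rfl
      calc g (φ x) = g (∑ j, Pi.single j (u j • x)) := by rw [hφ]
        _ = ∑ j, g (Pi.single j (u j • x)) := map_sum g _ Finset.univ
        _ = ∑ j, (u j • (g ∘ₗ LinearMap.single R (fun _ => N) j)) x := by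
            refine Finset.sum_congr rfl (fun j _ => ?_)
            have hsingle : Pi.single j (u j • x)
                = LinearMap.single R (fun _ => N) j (u j • x) := rfl
            rw [hsingle, map_smul, map_smul]
            rfl
        _ = (∑ j, u j • (g ∘ₗ LinearMap.single R (fun _ => N) j)) x :=
            (LinearMap.sum_apply _ _ _).symm
    rw [hsum]
    exact Submodule.sum_mem _ (fun j _ => Submodule.smul_mem_smul (humem j) trivial)
  -- Hausdorff property of D
  have hsepD : ∀ f : D, (∀ k : ℕ, f ∈ ((mI ^ k) • ⊤ : Submodule R D)) → f = 0 := by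
    intro f hf
    have hvan : ∀ (k : ℕ) (g : D), g ∈ ((mI ^ k) • ⊤ : Submodule R D) →
        ∀ x : N, (∀ r ∈ mI ^ k, r • x = 0) → g x = 0 := by
      intro k g hg
      refine Submodule.smul_induction_on hg ?_ ?_
      · intro r hr g' _ x hx
        show (r • g') x = 0
        rw [LinearMap.smul_apply, ← map_smul, hx r hr, map_zero]
      · intro g1 g2 h1 h2 x hx
        show (g1 + g2) x = 0
        rw [LinearMap.add_apply, h1 x hx, h2 x hx, add_zero]
    refine LinearMap.ext fun x => ?_
    obtain ⟨k, hk⟩ := htor x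
    rw [LinearMap.zero_apply]
    exact hvan k f (hf k) x hk
  -- generators
  obtain ⟨nG, s, hs⟩ := Submodule.fg_iff_exists_fin_generating_family.mp
    (IsNoetherian.noetherian (LinearMap.range Phi))
  have hsmem : ∀ i, s i ∈ LinearMap.range Phi := fun i =>
    hs ▸ Submodule.subset_span (Set.mem_range_self i)
  choose xs hxs using hsmem
  have hgen : (⊤ : Submodule R D) ≤ Submodule.span R (Set.range xs) ⊔ mI • ⊤ := by
    intro f _
    have h1 : Phi f ∈ Submodule.span R (Set.range s) := by rw [hs]; exact ⟨f, rfl⟩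
    have h2 : Set.range s ⊆ ⇑Phi '' Set.range xs := by
      rintro _ ⟨i, rfl⟩
      exact ⟨xs i, Set.mem_range_self i, hxs i⟩
    have h3 : Phi f ∈ Submodule.map Phi (Submodule.span R (Set.range xs)) := by
      rw [Submodule.map_span]
      exact Submodule.span_mono h2 h1
    obtain ⟨g, hgmem, hgf⟩ := h3
    have hker : f - g ∈ LinearMap.ker Phi := by
      rw [LinearMap.mem_ker, map_sub, hgf, sub_self]
    refine Submodule.mem_sup.mpr ⟨g, hgmem, f - g, hperp (hkerPhi ▸ hker), ?_⟩
    rw [add_sub_cancel]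
  -- D is Noetherian
  have htop : (⊤ : Submodule R D) = Submodule.span R (Set.range xs) :=
    fg_of_complete xs hgen hsepD
  haveI : Module.Finite R D := Module.finite_def.mpr
    ⟨(Set.finite_range xs).toFinset, by rw [Set.Finite.coe_toFinset]; exact htop.symm⟩
  haveI hDnoeth : IsNoetherian R D := inferInstance
  -- separation
  have hsep : ∀ (A : Submodule R N) (x : N), x ∉ A →
      ∃ f : D, (∀ a ∈ A, f a = 0) ∧ f x ≠ 0 := by
    intro A x hxA
    have hx0 : (Submodule.Quotient.mk x : N ⧸ A) ≠ 0 := by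
      simpa [Submodule.Quotient.mk_eq_zero] using hxA
    let l : R →ₗ[R] (N ⧸ A) := LinearMap.toSpanSingleton R (N ⧸ A) (Submodule.Quotient.mk x)
    have hl1 : l 1 = Submodule.Quotient.mk x := by
      rw [LinearMap.toSpanSingleton_apply, one_smul]
    have hJtop : LinearMap.ker l ≠ ⊤ := by
      intro h
      have : (1 : R) ∈ LinearMap.ker l := h ▸ Submodule.mem_top
      rw [LinearMap.mem_ker, hl1] at this
      exact hx0 this
    have hJm : LinearMap.ker l ≤ mI := le_maximalIdeal hJtop
    let χ : (R ⧸ LinearMap.ker l) →ₗ[R] (R ⧸ mI) :=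
      Submodule.mapQ _ _ LinearMap.id (fun r hr => hJm hr)
    let σ0 : (R ⧸ LinearMap.ker l) →ₗ[R] ↥E := e' ∘ₗ χ
    let eqv := LinearMap.quotKerEquivRange l
    let σ : ↥(LinearMap.range l) →ₗ[R] ↥E := σ0 ∘ₗ (eqv.symm : _ →ₗ[R] _)
    obtain ⟨h, hh⟩ := Module.Injective.out (Q := ↥E) (LinearMap.range l).subtype
      (Submodule.injective_subtype _) σ
    refine ⟨h ∘ₗ A.mkQ, ?_, ?_⟩
    · intro a ha
      show h (A.mkQ a) = 0
      have : A.mkQ a = 0 := (Submodule.Quotient.mk_eq_zero A).mpr ha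
      rw [this, map_zero]
    · show h (A.mkQ x) ≠ 0
      have hx_mem : (Submodule.Quotient.mk x : N ⧸ A) ∈ LinearMap.range l := ⟨1, hl1⟩
      have hmk : A.mkQ x = (LinearMap.range l).subtype ⟨Submodule.Quotient.mk x, hx_mem⟩ := rfl
      rw [hmk, hh]
      have heqv : eqv.symm ⟨Submodule.Quotient.mk x, hx_mem⟩
          = Submodule.Quotient.mk (1 : R) := by
        rw [LinearEquiv.symm_apply_eq]
        refine Subtype.ext ?_
        have : (eqv (Submodule.Quotient.mk (1 : R)) : N ⧸ A) = Submodule.Quotient.mk x := by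
          rw [LinearMap.quotKerEquivRange_apply_mk, hl1]
        exact this.symm
      show σ0 (eqv.symm ⟨Submodule.Quotient.mk x, hx_mem⟩) ≠ 0
      rw [heqv]
      have hχ1 : χ (Submodule.Quotient.mk (1 : R)) = (1 : R ⧸ mI) := by
        show Submodule.mapQ _ _ LinearMap.id _ (Submodule.Quotient.mk (1 : R)) = _
        rw [Submodule.mapQ_apply]
        rfl
      show e' (χ (Submodule.Quotient.mk (1 : R))) ≠ 0
      rw [hχ1]
      intro hcontra
      have : (1 : R ⧸ mI) = 0 := he'inj (by rw [hcontra, map_zero])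
      exact one_ne_zero this
  -- conclude
  refine ⟨Subrelation.wf (q := (· < ·)) (r := InvImage (· > ·) perp) ?_
    (InvImage.wf perp hDnoeth.wf)⟩
  intro A B hAB
  obtain ⟨hle, x, hxB, hxA⟩ := SetLike.lt_iff_le_and_exists.mp hAB
  obtain ⟨f, hfA, hfx⟩ := hsep A x hxA
  show perp B < perp A
  refine lt_of_le_of_ne (fun g hg a ha => hg a (hle ha)) ?_
  intro heq
  have hfB : f ∈ perp B := heq ▸ hfA
  exact hfx (hfB x hxB)
end
end
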